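/- Let L_h and L_v be Kripke complete unimodal logics such that the classes of frames for L_h and L_v are closed under the 'disjoint union with a spy-point' operation, and the product logic L_h × L_v is globally Kripke complete. Then for all δ-free bimodal formulas φ and ψ: φ globally entails ψ over L_h × L_v if and only if the formula (univ^δ ∧ □_h□_v φ) → □_h□_v ψ belongs to L_h ×^δ L_v, where univ^δ := □_h◇_v δ ∧ □_h□_h◇_v δ ∧ □_v◇_h δ ∧ □_v□_v◇_h δ. Hence the global L_h × L_v-consequence relation is reducible to L_h ×^δ L_v-validity. -/

import Mathlib

/-- Formulas of the bimodal language with horizontal and vertical boxes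
and the diagonal constant `δ`. -/
inductive Fml (P : Type*) where
  | var : P → Fml P
  | delta : Fml P
  | neg : Fml P → Fml P
  | and : Fml P → Fml P → Fml P
  | boxh : Fml P → Fml P
  | boxv : Fml P → Fml P
  deriving DecidableEq

namespace Fml

variable {P : Type*}

def or (φ ψ : Fml P) : Fml P := .neg (.and (.neg φ) (.neg ψ))
def imp (φ ψ : Fml P) : Fml P := Fml.or (.neg φ) ψ
def diah (φ : Fml P) : Fml P := .neg (.boxh (.neg φ))
def diav (φ : Fml P) : Fml P := .neg (.boxv (.neg φ))
/-- `□_h⁺ φ := φ ∧ □_h φ` -/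
def boxhp (φ : Fml P) : Fml P := .and φ (.boxh φ)
/-- `□_v⁺ φ := φ ∧ □_v φ` -/
def boxvp (φ : Fml P) : Fml P := .and φ (.boxv φ)
/-- `◇_h⁺ φ := φ ∨ ◇_h φ` -/
def diahp (φ : Fml P) : Fml P := Fml.or φ (diah φ)
/-- `◇_v⁺ φ := φ ∨ ◇_v φ` -/
def diavp (φ : Fml P) : Fml P := Fml.or φ (diav φ)

end Fml

/-- Satisfaction in a model based on the δ-product of the frames `(Wh, Rh)` and `(Wv, Rv)`
(frames living inside the ambient type `U`), with valuation `v`.  The diagonal `δ` is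
interpreted as `{(x,x) : x ∈ Wh ∩ Wv}`. -/
def dsat {U P : Type*} (Wh Wv : Set U) (Rh Rv : U → U → Prop) (v : P → Set (U × U)) :
    U × U → Fml P → Prop
  | p, .var q => p ∈ v q
  | p, .delta => p.1 = p.2 ∧ p.1 ∈ Wh ∧ p.1 ∈ Wv
  | p, .neg φ => ¬ dsat Wh Wv Rh Rv v p φ
  | p, .and φ ψ => dsat Wh Wv Rh Rv v p φ ∧ dsat Wh Wv Rh Rv v p ψ
  | p, .boxh φ => ∀ x : U, x ∈ Wh → Rh p.1 x → dsat Wh Wv Rh Rv v (x, p.2) φ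
  | p, .boxv φ => ∀ y : U, y ∈ Wv → Rv p.2 y → dsat Wh Wv Rh Rv v (p.1, y) φ

/-- A formula is δ-free if the diagonal constant does not occur in it. -/
def deltaFree {P : Type*} : Fml P → Prop
  | .var _ => True
  | .delta => False
  | .neg φ => deltaFree φ
  | .and φ ψ => deltaFree φ ∧ deltaFree ψ
  | .boxh φ => deltaFree φ
  | .boxv φ => deltaFree φ

universe u v

/-- A Kripke frame living inside the ambient type `U`. -/
structure KFrm (U : Type u) where
  W : Set U
  R : U → U → Prop

/-- The disjoint union of the frames `F i` with a fresh spy-point (`none`). -/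
def spyUnion {U I : Type u} (F : I → KFrm U) : KFrm (Option (U × I)) where
  W := {p | p = none ∨ ∃ (w : U) (i : I), p = some (w, i) ∧ w ∈ (F i).W}
  R := fun a b =>
    (a = none ∧ ∃ (w : U) (i : I), b = some (w, i) ∧ w ∈ (F i).W) ∨
    (∃ (w w' : U) (i : I), a = some (w, i) ∧ b = some (w', i) ∧
      w ∈ (F i).W ∧ w' ∈ (F i).W ∧ (F i).R w w')

/-- An isomorphism between frames: a bijection of the carriers preserving and
reflecting the relation. -/
def FrmIso {U : Type u} {U' : Type u} (F : KFrm U) (F' : KFrm U') : Prop :=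
  ∃ f : U → U', Set.BijOn f F.W F'.W ∧
    ∀ a b : U, a ∈ F.W → b ∈ F.W → (F.R a b ↔ F'.R (f a) (f b))

/-- Satisfaction in an abstract bimodal model (carrier `W` inside ambient type `A`),
ignoring the diagonal constant (δ is evaluated as falsum). -/
def bsat {A : Type u} {P : Type v} (W : Set A) (Rh Rv : A → A → Prop) (val : P → Set A) :
    A → Fml P → Prop
  | w, .var q => w ∈ val q
  | _, .delta => False
  | w, .neg φ => ¬ bsat W Rh Rv val w φ
  | w, .and φ ψ => bsat W Rh Rv val w φ ∧ bsat W Rh Rv val w ψ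
  | w, .boxh φ => ∀ u : A, u ∈ W → Rh w u → bsat W Rh Rv val u φ
  | w, .boxv φ => ∀ u : A, u ∈ W → Rv w u → bsat W Rh Rv val u φ

/-- Horizontal relation of the product of two frames. -/
def prodRh {U : Type u} (F G : KFrm U) : U × U → U × U → Prop :=
  fun p q => F.R p.1 q.1 ∧ p.2 = q.2

/-- Vertical relation of the product of two frames. -/
def prodRv {U : Type u} (F G : KFrm U) : U × U → U × U → Prop :=
  fun p q => p.1 = q.1 ∧ G.R p.2 q.2

/-- A formula is globally true in an abstract bimodal model. -/
def GlobTrue {A : Type u} {P : Type v} (W : Set A) (Rh Rv : A → A → Prop)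
    (val : P → Set A) (φ : Fml P) : Prop :=
  ∀ w : A, w ∈ W → bsat W Rh Rv val w φ

/-- The product logic `L_h × L_v` of the frame classes `Ch` (for `L_h`) and `Cv` (for `L_v`):
all δ-free bimodal formulas valid in every product of a frame for `L_h` with a frame
for `L_v`. -/
def ProductLogic {P : Type v} (Ch Cv : ∀ U : Type u, KFrm U → Prop) : Set (Fml P) :=
  {φ | deltaFree φ ∧ ∀ (U : Type u) (F G : KFrm U), Ch U F → Cv U G →
    ∀ (val : P → Set (U × U)) (p : U × U), p ∈ F.W ×ˢ G.W →
      bsat (F.W ×ˢ G.W) (prodRh F G) (prodRv F G) val p φ}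

/-- Global consequence over the logic `L` (as a set of formulas): every bimodal model
globally validating `L` and `φ` globally validates `ψ`. -/
def GlobCons {P : Type v} (L : Set (Fml P)) (φ ψ : Fml P) : Prop :=
  ∀ (A : Type u) (W : Set A) (Rh Rv : A → A → Prop) (val : P → Set A),
    (∀ χ ∈ L, GlobTrue W Rh Rv val χ) → GlobTrue W Rh Rv val φ → GlobTrue W Rh Rv val ψ

/-- Validity in the δ-product logic `L_h ×^δ L_v` of the frame classes `Ch`, `Cv`:
truth at every world of every model based on a δ-product of a frame for `L_h` with a
frame for `L_v`. -/
def DProdValid {P : Type v} (Ch Cv : ∀ U : Type u, KFrm U → Prop) (φ : Fml P) : Prop :=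
  ∀ (U : Type u) (F G : KFrm U), Ch U F → Cv U G →
    ∀ (val : P → Set (U × U)) (p : U × U), p ∈ F.W ×ˢ G.W →
      dsat F.W G.W F.R G.R val p φ

/-- The formula `univ^δ := □_h◇_vδ ∧ □_h□_h◇_vδ ∧ □_v◇_hδ ∧ □_v□_v◇_hδ`. -/
def univDelta {P : Type v} : Fml P :=
  .and (.boxh (Fml.diav .delta))
    (.and (.boxh (.boxh (Fml.diav .delta)))
      (.and (.boxv (Fml.diah .delta)) (.boxv (.boxv (Fml.diah .delta)))))

/-!
(⇒) If `univ^δ` holds at `p` in a δ-product, the horizontal and the vertical successors of `p`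
form one set `S`, closed under both relations, so `S × S` is a generated subframe of the
product. It validates `L_h × L_v`, `□_h□_v φ` at `p` makes `φ` globally true on it, and global
consequence yields `ψ` on `S × S`, that is `□_h□_v ψ` at `p`.

(⇐) By global completeness it suffices to show that `ψ` is globally true in every product
model `F × G` in which `φ` is. Take `G`-indexed copies of `F` and `F`-indexed copies of `G`,
each family under a spy point, placed in one carrier so that world `w` of copy `v` of `F` is
world `v` of copy `w` of `G`. The diagonal of their δ-product makes `univ^δ` true at the pair
of spy points, and the successors of that pair are copies of the points of `F × G`, satisfying
the same δ-free formulas.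

Global consequence quantifies over models in a fixed universe; it is moved between universes
through the model of theories in the finitely many variables of `φ` and `ψ`.
-/

namespace Fml

variable {P Q : Type*}

def vars : Fml P → List P
  | var q => [q]
  | delta => []
  | neg φ => φ.vars
  | and φ ψ => φ.vars ++ ψ.vars
  | boxh φ => φ.vars
  | boxv φ => φ.vars

def map (f : P → Q) : Fml P → Fml Q
  | var q => var (f q)
  | delta => delta
  | neg φ => neg (φ.map f)
  | and φ ψ => and (φ.map f) (ψ.map f)
  | boxh φ => boxh (φ.map f)
  | boxv φ => boxv (φ.map f)

theorem vars_ne_nil_of_deltaFree : ∀ {φ : Fml P}, deltaFree φ → φ.vars ≠ []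
  | var _, _ => List.cons_ne_nil _ _
  | delta, h => h.elim
  | neg φ, h | boxh φ, h | boxv φ, h => vars_ne_nil_of_deltaFree (φ := φ) h
  | and _ _, h => by simp [vars, vars_ne_nil_of_deltaFree h.1]

theorem deltaFree_map (f : P → Q) : ∀ {φ : Fml P}, deltaFree φ → deltaFree (φ.map f)
  | var _, _ => trivial
  | delta, h => h.elim
  | neg φ, h | boxh φ, h | boxv φ, h => deltaFree_map f (φ := φ) h
  | and _ _, h => ⟨deltaFree_map f h.1, deltaFree_map f h.2⟩

theorem map_eq_self {f : P → P} : ∀ {φ : Fml P}, (∀ q ∈ φ.vars, f q = q) → φ.map f = φ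
  | var q, h => congrArg var (h q (List.mem_singleton_self q))
  | delta, _ => rfl
  | neg φ, h => congrArg neg (map_eq_self (φ := φ) h)
  | boxh φ, h => congrArg boxh (map_eq_self (φ := φ) h)
  | boxv φ, h => congrArg boxv (map_eq_self (φ := φ) h)
  | and _ _, h => by
    simp only [vars, List.mem_append] at h
    rw [map, map_eq_self fun q hq => h q (.inl hq), map_eq_self fun q hq => h q (.inr hq)]

end Fml

section Semantics

variable {A : Type*} {P Q : Type*} (W : Set A) (Rh Rv : A → A → Prop)

theorem bsat_map (val : P → Set A) (f : Q → P) (χ : Fml Q) (x : A) :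
    bsat W Rh Rv val x (χ.map f) ↔ bsat W Rh Rv (val ∘ f) x χ := by
  induction χ generalizing x with
  | var q | delta => rfl
  | neg χ ih => exact not_congr (ih x)
  | and χ θ ihχ ihθ => exact and_congr (ihχ x) (ihθ x)
  | boxh χ ih | boxv χ ih => exact forall₂_congr fun u _ => imp_congr_right fun _ => ih u

structure IsGenerated (X : Set A) : Prop where
  subset : X ⊆ W
  closed_h : ∀ a ∈ X, ∀ b ∈ W, Rh a b → b ∈ X
  closed_v : ∀ a ∈ X, ∀ b ∈ W, Rv a b → b ∈ X

variable {W Rh Rv}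

theorem IsGenerated.bsat_iff {X : Set A} (hX : IsGenerated W Rh Rv X) (val : P → Set A)
    (χ : Fml P) {x : A} (hx : x ∈ X) :
    bsat X Rh Rv val x χ ↔ bsat W Rh Rv val x χ := by
  induction χ generalizing x with
  | var q | delta => rfl
  | neg χ ih => exact not_congr (ih hx)
  | and χ θ ihχ ihθ => exact and_congr (ihχ hx) (ihθ hx)
  | boxh χ ih =>
    refine ⟨fun h u hu hxu => ?_, fun h u hu hxu => (ih hu).2 (h u (hX.subset hu) hxu)⟩
    have hu' := hX.closed_h x hx u hu hxu
    exact (ih hu').1 (h u hu' hxu)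
  | boxv χ ih =>
    refine ⟨fun h u hu hxu => ?_, fun h u hu hxu => (ih hu).2 (h u (hX.subset hu) hxu)⟩
    have hu' := hX.closed_v x hx u hu hxu
    exact (ih hu').1 (h u hu' hxu)

end Semantics

theorem dsat_iff_bsat_prod {U : Type u} {P : Type v} (F G : KFrm U) (val : P → Set (U × U))
    {χ : Fml P} (hχ : deltaFree χ) {p : U × U} (hp : p ∈ F.W ×ˢ G.W) :
    dsat F.W G.W F.R G.R val p χ ↔ bsat (F.W ×ˢ G.W) (prodRh F G) (prodRv F G) val p χ := by
  induction χ generalizing p with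
  | var q => rfl
  | delta => exact hχ.elim
  | neg χ ih => exact not_congr (ih hχ hp)
  | and χ θ ihχ ihθ => exact and_congr (ihχ hχ.1 hp) (ihθ hχ.2 hp)
  | boxh χ ih =>
    constructor
    · rintro h ⟨x, y⟩ ⟨hx, -⟩ ⟨hpx, rfl⟩
      exact (ih hχ ⟨hx, hp.2⟩).1 (h x hx hpx)
    · exact fun h x hx hpx => (ih hχ (p := (x, p.2)) ⟨hx, hp.2⟩).2 (h _ ⟨hx, hp.2⟩ ⟨hpx, rfl⟩)
  | boxv χ ih =>
    constructor
    · rintro h ⟨x, y⟩ ⟨-, hy⟩ ⟨rfl, hpy⟩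
      exact (ih hχ (p := (p.1, y)) ⟨hp.1, hy⟩).1 (h y hy hpy)
    · exact fun h y hy hpy => (ih hχ (p := (p.1, y)) ⟨hp.1, hy⟩).2 (h _ ⟨hp.1, hy⟩ ⟨rfl, hpy⟩)

theorem map_mem_productLogic {P : Type v} {Ch Cv : ∀ U : Type u, KFrm U → Prop} {χ : Fml P}
    (hχ : χ ∈ ProductLogic Ch Cv) (f : P → P) : χ.map f ∈ ProductLogic Ch Cv :=
  ⟨Fml.deltaFree_map f hχ.1, fun U F G hF hG val p hp =>
    (bsat_map _ _ _ val f χ p).2 (hχ.2 U F G hF hG _ p hp)⟩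

universe w w₁ w₂

section TheoryModel

variable {A : Type*} {Q : Type*} (W : Set A) (Rh Rv : A → A → Prop) (val : Q → Set A)

def theory (x : A) : Set (Fml Q) := {c | bsat W Rh Rv val x c}

def theoryWorlds : Set (ULift.{w} (Set (Fml Q))) := (fun x => ⟨theory W Rh Rv val x⟩) '' W

def theoryRh (T T' : ULift.{w} (Set (Fml Q))) : Prop := ∀ c, Fml.boxh c ∈ T.down → c ∈ T'.down

def theoryRv (T T' : ULift.{w} (Set (Fml Q))) : Prop := ∀ c, Fml.boxv c ∈ T.down → c ∈ T'.down

def theoryVal (q : Q) : Set (ULift.{w} (Set (Fml Q))) := {T | Fml.var q ∈ T.down}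

theorem bsat_theory (c : Fml Q) {x : A} (hx : x ∈ W) :
    bsat (theoryWorlds.{w} W Rh Rv val) theoryRh theoryRv theoryVal ⟨theory W Rh Rv val x⟩ c ↔
      bsat W Rh Rv val x c := by
  induction c generalizing x with
  | var q | delta => rfl
  | neg c ih => exact not_congr (ih hx)
  | and c d ihc ihd => exact and_congr (ihc hx) (ihd hx)
  | boxh c ih =>
    constructor
    · exact fun h y hy hxy => (ih hy).1 (h _ ⟨y, hy, rfl⟩ fun d hd => hd y hy hxy)
    · rintro h _ ⟨y, hy, rfl⟩ hxy
      exact (ih hy).2 (hxy c h)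
  | boxv c ih =>
    constructor
    · exact fun h y hy hxy => (ih hy).1 (h _ ⟨y, hy, rfl⟩ fun d hd => hd y hy hxy)
    · rintro h _ ⟨y, hy, rfl⟩ hxy
      exact (ih hy).2 (hxy c h)

end TheoryModel

theorem GlobCons.transfer {P : Type v} {L : Set (Fml P)} (hL : ∀ χ ∈ L, ∀ f : P → P, χ.map f ∈ L)
    {φ ψ : Fml P} (hφ : deltaFree φ) (h : GlobCons.{w₁} L φ ψ) : GlobCons.{w₂} L φ ψ := by
  intro A W Rh Rv val hLW hφW x₀ hx₀
  set l := φ.vars ++ ψ.vars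
  have : Nonempty (Fin l.length) :=
    ⟨⟨0, List.length_pos_iff.2 (by simp [l, Fml.vars_ne_nil_of_deltaFree hφ])⟩⟩
  set idx : P → Fin l.length := Function.invFun l.get
  have get_idx : ∀ q ∈ l, l.get (idx q) = q := fun q hq =>
    Function.invFun_eq (List.mem_iff_get.1 hq)
  -- the model of theories over the finitely many variables in `l`, read back through `idx`
  let T : A → ULift.{w₁} (Set (Fml (Fin l.length))) := fun x => ⟨theory W Rh Rv (val ∘ l.get) x⟩
  have bsat_T : ∀ χ : Fml P, ∀ x ∈ W,
      bsat (theoryWorlds W Rh Rv (val ∘ l.get)) theoryRh theoryRv (theoryVal ∘ idx) (T x) χ ↔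
        bsat W Rh Rv val x (χ.map (l.get ∘ idx)) := fun χ x hx => by
    rw [← bsat_map, bsat_theory _ _ _ _ _ hx, bsat_map, bsat_map]
    rfl
  have map_eq : ∀ χ : Fml P, (∀ q ∈ χ.vars, q ∈ l) → χ.map (l.get ∘ idx) = χ := fun χ hχ =>
    Fml.map_eq_self fun q hq => get_idx q (hχ q hq)
  have hψ := h _ (theoryWorlds W Rh Rv (val ∘ l.get)) theoryRh theoryRv (theoryVal ∘ idx)
    (fun χ hχ => ?_) ?_ (T x₀) ⟨x₀, hx₀, rfl⟩
  · rwa [bsat_T ψ x₀ hx₀, map_eq ψ fun q hq => List.mem_append_right _ hq] at hψ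
  · rintro _ ⟨x, hx, rfl⟩
    exact (bsat_T χ x hx).2 (hLW _ (hL χ hχ _) x hx)
  · rintro _ ⟨x, hx, rfl⟩
    rw [bsat_T φ x hx, map_eq φ fun q hq => List.mem_append_left _ hq]
    exact hφW x hx

section DeltaProduct

variable {U P : Type*} {Wh Wv : Set U} {Rh Rv : U → U → Prop} {val : P → Set (U × U)}

theorem dsat_imp {p : U × U} {φ ψ : Fml P} :
    dsat Wh Wv Rh Rv val p (φ.imp ψ) ↔ (dsat Wh Wv Rh Rv val p φ → dsat Wh Wv Rh Rv val p ψ) := by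
  simp only [Fml.imp, Fml.or, dsat, not_not]
  tauto

theorem dsat_univDelta {p : U × U} :
    dsat Wh Wv Rh Rv val p univDelta ↔
      (∀ x ∈ Wh, Rh p.1 x → x ∈ Wv ∧ Rv p.2 x) ∧
      (∀ x ∈ Wh, Rh p.1 x → ∀ x' ∈ Wh, Rh x x' → x' ∈ Wv ∧ Rv p.2 x') ∧
      (∀ y ∈ Wv, Rv p.2 y → y ∈ Wh ∧ Rh p.1 y) ∧
      (∀ y ∈ Wv, Rv p.2 y → ∀ y' ∈ Wv, Rv y y' → y' ∈ Wh ∧ Rh p.1 y') := by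
  simp only [univDelta, Fml.diav, Fml.diah, dsat, not_forall, not_not, exists_prop]
  grind

end DeltaProduct

section Rectangle

variable {U P : Type*} (F G : KFrm U)

def succRect (p : U × U) : Set (U × U) :=
  {x | x ∈ F.W ∧ F.R p.1 x} ×ˢ {y | y ∈ G.W ∧ G.R p.2 y}

variable {F G} {val : P → Set (U × U)} {p : U × U}

theorem dsat_boxh_boxv {χ : Fml P} :
    dsat F.W G.W F.R G.R val p (.boxh (.boxv χ)) ↔
      ∀ q ∈ succRect F G p, dsat F.W G.W F.R G.R val q χ :=
  ⟨fun h q hq => h q.1 hq.1.1 hq.1.2 q.2 hq.2.1 hq.2.2,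
    fun h x hx hpx y hy hpy => h (x, y) ⟨⟨hx, hpx⟩, hy, hpy⟩⟩

/-- Under `univ^δ` the horizontal and the vertical successors of `p` coincide and are closed
under both relations, so their square is a generated subframe of the product. -/
theorem isGenerated_succRect (h : dsat F.W G.W F.R G.R val p univDelta) :
    IsGenerated (F.W ×ˢ G.W) (prodRh F G) (prodRv F G) (succRect F G p) := by
  obtain ⟨hhv, hhhv, hvh, hvvh⟩ := dsat_univDelta.1 h
  refine ⟨fun q hq => ⟨hq.1.1, hq.2.1⟩, ?_, ?_⟩
  · rintro ⟨x, y⟩ ⟨hx, hy⟩ ⟨x', y'⟩ ⟨hx', -⟩ ⟨hxx', rfl⟩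
    obtain ⟨hx'G, hpx'⟩ := hhhv x hx.1 hx.2 x' hx' hxx'
    exact ⟨hvh x' hx'G hpx', hy⟩
  · rintro ⟨x, y⟩ ⟨hx, hy⟩ ⟨x', y'⟩ ⟨-, hy'⟩ ⟨rfl, hyy'⟩
    obtain ⟨hy'F, hpy'⟩ := hvvh y hy.1 hy.2 y' hy' hyy'
    exact ⟨hx, hhv y' hy'F hpy'⟩

end Rectangle

theorem dProdValid_of_globCons {P : Type v} {Ch Cv : ∀ U : Type u, KFrm U → Prop}
    {φ ψ : Fml P} (hφ : deltaFree φ) (hψ : deltaFree ψ)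
    (h : GlobCons.{u} (ProductLogic Ch Cv) φ ψ) :
    DProdValid Ch Cv (Fml.imp (.and univDelta (.boxh (.boxv φ))) (.boxh (.boxv ψ))) := by
  intro U F G hF hG val p _
  rw [dsat_imp]
  rintro ⟨hδ, hφp⟩
  have hX := isGenerated_succRect hδ
  have dsat_iff : ∀ {χ : Fml P}, deltaFree χ → ∀ q ∈ succRect F G p,
      dsat F.W G.W F.R G.R val q χ ↔ bsat (succRect F G p) (prodRh F G) (prodRv F G) val q χ :=
    fun hχ q hq => (dsat_iff_bsat_prod F G val hχ (hX.subset hq)).trans (hX.bsat_iff val _ hq).symm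
  have hψX := h (U × U) (succRect F G p) (prodRh F G) (prodRv F G) val
    (fun χ hχ q hq => (hX.bsat_iff val χ hq).2 (hχ.2 U F G hF hG val q (hX.subset hq)))
    (fun q hq => (dsat_iff hφ q hq).1 (dsat_boxh_boxv.1 hφp q hq))
  exact dsat_boxh_boxv.2 fun q hq => (dsat_iff hψ q hq).2 (hψX q hq)

section Spy

variable {U : Type u} {F : KFrm U} {S : Set U} {e : U × U → U × U}

/-- Copies of `F` indexed by `S` below a spy point `none`; world `w` of copy `i` sits at
`some (e (w, i))`. -/
def spyCopies (F : KFrm U) (S : Set U) (e : U × U → U × U) : KFrm (Option (U × U)) where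
  W := {x | x = none ∨ ∃ w ∈ F.W, ∃ i ∈ S, x = some (e (w, i))}
  R a b := (a = none ∧ ∃ w ∈ F.W, ∃ i ∈ S, b = some (e (w, i))) ∨
    ∃ w ∈ F.W, ∃ w' ∈ F.W, ∃ i ∈ S, a = some (e (w, i)) ∧ b = some (e (w', i)) ∧ F.R w w'

theorem frmIso_spyUnion_spyCopies (F : KFrm U) (S : Set U) (he : Function.Injective e) :
    FrmIso (spyUnion fun _ : S => F) (spyCopies F S e) := by
  set g : U × S → U × U := fun q => e (q.1, q.2)
  have hg : Function.Injective g := fun a b hab => by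
    obtain ⟨h₁, h₂⟩ := Prod.mk.inj (he hab)
    exact Prod.ext h₁ (Subtype.ext h₂)
  have hmap := Option.map_injective hg
  refine ⟨Option.map g, ⟨?_, hmap.injOn, ?_⟩, fun a b _ _ => ⟨?_, ?_⟩⟩
  · rintro _ (rfl | ⟨w, i, rfl, hw⟩)
    exacts [Or.inl rfl, Or.inr ⟨w, hw, i, i.2, rfl⟩]
  · rintro _ (rfl | ⟨w, hw, i, hi, rfl⟩)
    exacts [⟨none, Or.inl rfl, rfl⟩, ⟨some (w, ⟨i, hi⟩), Or.inr ⟨w, ⟨i, hi⟩, rfl, hw⟩, rfl⟩]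
  · rintro (⟨rfl, w, i, rfl, hw⟩ | ⟨w, w', i, rfl, rfl, hw, hw', hr⟩)
    exacts [Or.inl ⟨rfl, w, hw, i, i.2, rfl⟩, Or.inr ⟨w, hw, w', hw', i, i.2, rfl, rfl, hr⟩]
  · rintro (⟨ha, w, hw, i, hi, hb⟩ | ⟨w, hw, w', hw', i, hi, ha, hb, hr⟩)
    · obtain rfl : a = none := hmap ha
      obtain rfl : b = some (w, ⟨i, hi⟩) := hmap hb
      exact Or.inl ⟨rfl, w, ⟨i, hi⟩, rfl, hw⟩
    · obtain rfl : a = some (w, ⟨i, hi⟩) := hmap ha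
      obtain rfl : b = some (w', ⟨i, hi⟩) := hmap hb
      exact Or.inr ⟨w, w', ⟨i, hi⟩, rfl, rfl, hw, hw', hr⟩

theorem spyCopies_R_none {b : Option (U × U)} :
    (spyCopies F S e).R none b ↔ ∃ w ∈ F.W, ∃ i ∈ S, b = some (e (w, i)) := by
  simp [spyCopies]

theorem spyCopies_R_some (he : Function.Injective e) {w i : U} {b : Option (U × U)} :
    (spyCopies F S e).R (some (e (w, i))) b ↔
      w ∈ F.W ∧ i ∈ S ∧ ∃ w' ∈ F.W, b = some (e (w', i)) ∧ F.R w w' := by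
  constructor
  · rintro (⟨h, -⟩ | ⟨w₁, hw₁, w', hw', i₁, hi₁, ha, rfl, hr⟩)
    · exact absurd h (Option.some_ne_none _)
    · obtain ⟨rfl, rfl⟩ := Prod.mk.inj (he (Option.some.inj ha))
      exact ⟨hw₁, hi₁, w', hw', rfl, hr⟩
  · rintro ⟨hw, hi, w', hw', rfl, hr⟩
    exact Or.inr ⟨w, hw, w', hw', i, hi, rfl, rfl, hr⟩

theorem spyCopies_succ {a b : Option (U × U)} (h : (spyCopies F S e).R a b) :
    ∃ w ∈ F.W, ∃ i ∈ S, b = some (e (w, i)) := by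
  rcases h with ⟨-, hb⟩ | ⟨-, -, w', hw', i, hi, -, rfl, -⟩
  exacts [hb, ⟨w', hw', i, hi, rfl⟩]

theorem spyCopies_mem_W_of_R {a b : Option (U × U)} (h : (spyCopies F S e).R a b) :
    b ∈ (spyCopies F S e).W :=
  Or.inr (spyCopies_succ h)

end Spy

section SpyProduct

variable {U : Type u} {P : Type v} (F G : KFrm U)

/-- In the δ-product of `spyH F G` with `spyV F G`, the point `(some (w, i), some (i', v))`
stands for the point `(w, v)` of `F × G`. -/
abbrev spyH : KFrm (Option (U × U)) := spyCopies F G.W id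

abbrev spyV : KFrm (Option (U × U)) := spyCopies G F.W Prod.swap

def spyVal (val : P → Set (U × U)) (q : P) : Set (Option (U × U) × Option (U × U)) :=
  {p | ∃ a ∈ p.1, ∃ b ∈ p.2, (a.1, b.2) ∈ val q}

variable {F G}

theorem dsat_spy_iff (val : P → Set (U × U)) {χ : Fml P} (hχ : deltaFree χ) {w i i' v : U}
    (hw : w ∈ F.W) (hi : i ∈ G.W) (hi' : i' ∈ F.W) (hv : v ∈ G.W) :
    dsat (spyH F G).W (spyV F G).W (spyH F G).R (spyV F G).R (spyVal val)
        (some (w, i), some (i', v)) χ ↔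
      bsat (F.W ×ˢ G.W) (prodRh F G) (prodRv F G) val (w, v) χ := by
  induction χ generalizing w v with
  | var q => exact ⟨fun ⟨_, rfl, _, rfl, h⟩ => h, fun h => ⟨_, rfl, _, rfl, h⟩⟩
  | delta => exact hχ.elim
  | neg χ ih => exact not_congr (ih hχ hw hv)
  | and χ θ ihχ ihθ => exact and_congr (ihχ hχ.1 hw hv) (ihθ hχ.2 hw hv)
  | boxh χ ih =>
    constructor
    · rintro h ⟨x, y⟩ ⟨hx, -⟩ ⟨hwx, rfl⟩
      have hR := (spyCopies_R_some (e := id) Function.injective_id).2 ⟨hw, hi, x, hx, rfl, hwx⟩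
      exact (ih hχ hx hv).1 (h _ (spyCopies_mem_W_of_R hR) hR)
    · intro h x _ hR
      obtain ⟨-, -, x, hx, rfl, hwx⟩ := (spyCopies_R_some (e := id) Function.injective_id).1 hR
      exact (ih hχ hx hv).2 (h (x, v) ⟨hx, hv⟩ ⟨hwx, rfl⟩)
  | boxv χ ih =>
    constructor
    · rintro h ⟨x, y⟩ ⟨-, hy⟩ ⟨rfl, hvy⟩
      have hR :=
        (spyCopies_R_some (e := Prod.swap) Prod.swap_injective).2 ⟨hv, hi', y, hy, rfl, hvy⟩
      exact (ih hχ hw hy).1 (h _ (spyCopies_mem_W_of_R hR) hR)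
    · intro h y _ hR
      obtain ⟨-, -, y, hy, rfl, hvy⟩ := (spyCopies_R_some (e := Prod.swap) Prod.swap_injective).1 hR
      exact (ih hχ hw hy).2 (h (w, y) ⟨hw, hy⟩ ⟨rfl, hvy⟩)

/-- Every successor in either spy frame is a point `some (w, v)` with `(w, v) ∈ F × G`, and
these are the successors of the spy point in both frames. -/
theorem dsat_spy_univDelta (val : P → Set (U × U)) :
    dsat (spyH F G).W (spyV F G).W (spyH F G).R (spyV F G).R (spyVal val) (none, none)
      univDelta := by
  have hHV : ∀ a b, (spyH F G).R a b → b ∈ (spyV F G).W ∧ (spyV F G).R none b := by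
    intro a b hab
    obtain ⟨w, hw, i, hi, rfl⟩ := spyCopies_succ hab
    have hR : (spyV F G).R none (some (w, i)) := spyCopies_R_none.2 ⟨i, hi, w, hw, rfl⟩
    exact ⟨spyCopies_mem_W_of_R hR, hR⟩
  have hVH : ∀ a b, (spyV F G).R a b → b ∈ (spyH F G).W ∧ (spyH F G).R none b := by
    intro a b hab
    obtain ⟨v, hv, i, hi, rfl⟩ := spyCopies_succ hab
    have hR : (spyH F G).R none (some (i, v)) := spyCopies_R_none.2 ⟨i, hi, v, hv, rfl⟩
    exact ⟨spyCopies_mem_W_of_R hR, hR⟩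
  exact dsat_univDelta.2 ⟨fun _ _ => hHV _ _, fun _ _ _ _ _ => hHV _ _,
    fun _ _ => hVH _ _, fun _ _ _ _ _ => hVH _ _⟩

end SpyProduct

theorem globTrue_of_dProdValid {P : Type v} {Ch Cv : ∀ U : Type u, KFrm U → Prop}
    (hChIso : ∀ (U U' : Type u) (F : KFrm U) (F' : KFrm U'), Ch U F → FrmIso F F' → Ch U' F')
    (hCvIso : ∀ (U U' : Type u) (F : KFrm U) (F' : KFrm U'), Cv U F → FrmIso F F' → Cv U' F')
    (hChSpy : ∀ (U I : Type u) (F : I → KFrm U), (∀ i : I, Ch U (F i)) →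
      Ch (Option (U × I)) (spyUnion F))
    (hCvSpy : ∀ (U I : Type u) (F : I → KFrm U), (∀ i : I, Cv U (F i)) →
      Cv (Option (U × I)) (spyUnion F))
    {φ ψ : Fml P} (hφ : deltaFree φ) (hψ : deltaFree ψ)
    (h : DProdValid Ch Cv (Fml.imp (.and univDelta (.boxh (.boxv φ))) (.boxh (.boxv ψ))))
    {U : Type u} {F G : KFrm U} (hF : Ch U F) (hG : Cv U G) {val : P → Set (U × U)}
    (hφF : GlobTrue (F.W ×ˢ G.W) (prodRh F G) (prodRv F G) val φ) :
    GlobTrue (F.W ×ˢ G.W) (prodRh F G) (prodRv F G) val ψ := by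
  rintro ⟨w, v⟩ ⟨hw, hv⟩
  have hH : Ch _ (spyH F G) := hChIso _ _ _ _ (hChSpy _ _ _ fun _ => hF)
    (frmIso_spyUnion_spyCopies F G.W Function.injective_id)
  have hV : Cv _ (spyV F G) := hCvIso _ _ _ _ (hCvSpy _ _ _ fun _ => hG)
    (frmIso_spyUnion_spyCopies G F.W Prod.swap_injective)
  have hφX : ∀ q ∈ succRect (spyH F G) (spyV F G) (none, none),
      dsat (spyH F G).W (spyV F G).W (spyH F G).R (spyV F G).R (spyVal val) q φ := by
    rintro ⟨x, y⟩ ⟨⟨-, hx⟩, -, hy⟩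
    obtain ⟨w', hw', i, hi, rfl⟩ := spyCopies_R_none.1 hx
    obtain ⟨v', hv', i', hi', rfl⟩ := spyCopies_R_none.1 hy
    exact (dsat_spy_iff val hφ hw' hi hi' hv').2 (hφF _ ⟨hw', hv'⟩)
  have hψX := dsat_boxh_boxv.1 <| dsat_imp.1
    (h _ _ _ hH hV (spyVal val) (none, none) ⟨Or.inl rfl, Or.inl rfl⟩)
    ⟨dsat_spy_univDelta val, dsat_boxh_boxv.2 hφX⟩
  have hH_wv : (spyH F G).R none (some (w, v)) := spyCopies_R_none.2 ⟨w, hw, v, hv, rfl⟩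
  have hV_wv : (spyV F G).R none (some (w, v)) := spyCopies_R_none.2 ⟨v, hv, w, hw, rfl⟩
  exact (dsat_spy_iff val hψ hw hv hw hv).1 <| hψX _
    ⟨⟨spyCopies_mem_W_of_R hH_wv, hH_wv⟩, spyCopies_mem_W_of_R hV_wv, hV_wv⟩

/-- **Reduction of global product consequence to δ-product validity**: if the frame
classes of the Kripke complete logics `L_h`, `L_v` are closed under isomorphic copies and
under disjoint unions with a spy-point, and `L_h × L_v` is globally Kripke complete, then
for all δ-free formulas `φ`, `ψ`:
`φ ⊨*_{L_h × L_v} ψ` iff `(univ^δ ∧ □_h□_v φ) → □_h□_v ψ ∈ L_h ×^δ L_v`. -/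
theorem global_consequence_reduction {P : Type v} (Ch Cv : ∀ U : Type u, KFrm U → Prop)
    (hChIso : ∀ (U U' : Type u) (F : KFrm U) (F' : KFrm U'), Ch U F → FrmIso F F' → Ch U' F')
    (hCvIso : ∀ (U U' : Type u) (F : KFrm U) (F' : KFrm U'), Cv U F → FrmIso F F' → Cv U' F')
    (hChSpy : ∀ (U I : Type u) (F : I → KFrm U), (∀ i : I, Ch U (F i)) →
      Ch (Option (U × I)) (spyUnion F))
    (hCvSpy : ∀ (U I : Type u) (F : I → KFrm U), (∀ i : I, Cv U (F i)) →
      Cv (Option (U × I)) (spyUnion F))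
    (hGKC : ∀ φ ψ : Fml P, deltaFree φ → deltaFree ψ →
      (GlobCons (ProductLogic Ch Cv) φ ψ ↔
        ∀ (U : Type u) (F G : KFrm U), Ch U F → Cv U G → ∀ val : P → Set (U × U),
          GlobTrue (F.W ×ˢ G.W) (prodRh F G) (prodRv F G) val φ →
          GlobTrue (F.W ×ˢ G.W) (prodRh F G) (prodRv F G) val ψ)) :
    ∀ φ ψ : Fml P, deltaFree φ → deltaFree ψ →
      (GlobCons (ProductLogic Ch Cv) φ ψ ↔
        DProdValid Ch Cv
          (Fml.imp (.and univDelta (.boxh (.boxv φ))) (.boxh (.boxv ψ)))) := by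
  intro φ ψ hφ hψ
  have hL : ∀ χ ∈ ProductLogic Ch Cv, ∀ f : P → P, χ.map f ∈ ProductLogic Ch Cv :=
    fun _ hχ f => map_mem_productLogic hχ f
  constructor
  · exact fun h => dProdValid_of_globCons hφ hψ (h.transfer hL hφ)
  · intro h
    refine ((hGKC φ ψ hφ hψ).2 fun U F G hF hG val => ?_).transfer hL hφ
    exact globTrue_of_dProdValid hChIso hCvIso hChSpy hCvSpy hφ hψ h hF hG
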